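/- In the covering graph 𝒢 of a sun-like map: (i) all but at most one of the arrows starting from any vertex α end at a vertex in the basis; (ii) if α → β is an arrow and H(β) > 0, then H(β) = H(α) + 1. -/

import Mathlib

open Set Filter Topology

/-- An abstract "sun-like" setting: a lifted graph `T` (metric space with a
translation `τ`, an embedded real line and its retraction `rR`), together with a
degree-one continuous map `F` whose set `X = closure(T ∖ T_ℝ) ∩ rR⁻¹[0,1)` is a
finite disjoint union of compact intervals (the branches), each attached to the
invariant set `T_ℝ` at its minimum endpoint. Branches are parametrized by
order-embeddings `emb i : [0, len i] → T`. -/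
structure SunLike (T : Type) [MetricSpace T] where
  /-- the translation `x ↦ x + 1`, a homeomorphism -/
  τ : Equiv.Perm T
  τ_cont : Continuous τ
  τ_symm_cont : Continuous τ.symm
  dist_inv : ∀ x y : T, dist (τ x) (τ y) = dist x y
  /-- the continuous degree-one map -/
  F : T → T
  F_cont : Continuous F
  deg1 : ∀ x, F (τ x) = τ (F x)
  /-- the embedded copy of `ℝ` -/
  line : ℝ → T
  line_cont : Continuous line
  line_inj : Function.Injective line
  line_tau : ∀ s, τ (line s) = line (s + 1)
  /-- the natural retraction `r_ℝ : T → ℝ` -/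
  rR : T → ℝ
  rR_cont : Continuous rR
  rR_line : ∀ s, rR (line s) = s
  rR_tau : ∀ x, rR (τ x) = rR x + 1
  /-- `T_ℝ = closure (⋃ n, F^n(ℝ))` -/
  TR : Set T
  TR_def : TR = closure (⋃ n : ℕ, F^[n] '' Set.range line)
  TR_inv : Set.MapsTo F TR TR
  /-- finitely many branches -/
  Λ : Type
  Λfin : Finite Λ
  len : Λ → ℝ
  len_pos : ∀ i, 0 < len i
  /-- parametrization of the branch `Xⁱ` by the interval `[0, len i]` -/
  emb : Λ → ℝ → T
  emb_cont : ∀ i, ContinuousOn (emb i) (Set.Icc 0 (len i))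
  emb_inj : ∀ i, Set.InjOn (emb i) (Set.Icc 0 (len i))
  /-- the attachment point `min Xⁱ = emb i 0` lies in `T_ℝ` -/
  attach_mem : ∀ i, emb i 0 ∈ TR
  /-- a branch meets `T_ℝ` exactly at its minimum endpoint -/
  branch_inter_TR : ∀ i, (emb i '' Set.Icc 0 (len i)) ∩ TR = {emb i 0}
  branch_open : ∀ i, IsOpen (emb i '' Set.Ioc 0 (len i))
  /-- `X = closure(T ∖ T_ℝ) ∩ r_ℝ⁻¹([0,1))` is the union of the branches -/
  branches_def : closure (TRᶜ) ∩ rR ⁻¹' Set.Ico (0 : ℝ) 1 = ⋃ i, emb i '' Set.Icc 0 (len i)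
  /-- distinct integer translates of branches are disjoint -/
  translates_disjoint : ∀ i j : Λ, ∀ p q : ℤ, (i ≠ j ∨ p ≠ q) →
    Disjoint ((τ ^ p) '' (emb i '' Set.Icc 0 (len i))) ((τ ^ q) '' (emb j '' Set.Icc 0 (len j)))
  /-- the natural retraction onto the branch `Xⁱ` -/
  ret : Λ → T → T
  ret_cont : ∀ i, Continuous (ret i)
  ret_id : ∀ i, ∀ x ∈ emb i '' Set.Icc 0 (len i), ret i x = x
  ret_out : ∀ i x, x ∉ emb i '' Set.Icc 0 (len i) → ret i x = emb i 0

namespace SunLike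

variable {T : Type} [MetricSpace T] (S : SunLike T)

/-- the branch `Xⁱ` -/
def branch (i : S.Λ) : Set T := S.emb i '' Set.Icc 0 (S.len i)

/-- `min Xⁱ`, the attachment point of the branch `Xⁱ` -/
def minB (i : S.Λ) : T := S.emb i 0

/-- `X`, the union of the branches -/
def X : Set T := ⋃ i, S.branch i

/-- `X + ℤ`, the union of all integer translates of the branches -/
def XZ : Set T := ⋃ p : ℤ, (S.τ ^ p) '' S.X

/-- `X^∞`: points of `X` whose whole orbit stays in `X + ℤ` -/
def Xinf : Set T := {x | x ∈ S.X ∧ ∀ n : ℕ, S.F^[n] x ∈ S.XZ}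

/-- the order of the branch `Xⁱ` (minimum at the attachment point) -/
def ble (i : S.Λ) (x y : T) : Prop :=
  ∃ s t : ℝ, s ∈ Set.Icc 0 (S.len i) ∧ t ∈ Set.Icc 0 (S.len i) ∧ s ≤ t ∧
    S.emb i s = x ∧ S.emb i t = y

/-- `I ⊂ Xⁱ` positively `F^n`-covers `J + p`, where `J ⊂ Xʲ`: there are `x ≤ y` in `I`
with `r_j(F^n(x) - p) ≤ min J` and `max J ≤ r_j(F^n(y) - p)`. -/
def PosCover (n : ℕ) (i j : S.Λ) (I J : Set T) (p : ℤ) : Prop :=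
  ∃ x y, x ∈ I ∧ y ∈ I ∧ S.ble i x y ∧
    (∀ z ∈ J, S.ble j (S.ret j ((S.τ ^ (-p)) (S.F^[n] x))) z) ∧
    (∀ z ∈ J, S.ble j z (S.ret j ((S.τ ^ (-p)) (S.F^[n] y))))

/-- `rot S x s` : the rotation number of `x` exists and equals `s` -/
def rot (x : T) (s : ℝ) : Prop :=
  Tendsto (fun n : ℕ => (S.rR (S.F^[n] x) - S.rR x) / (n : ℝ)) atTop (𝓝 s)

end SunLike

/-- The basic partition `𝒫` of the branches of a sun-like map: finitely many disjoint
compact subintervals `A = [lo A, hi A] ⊂ X^{bi A}` with `F(A) ⊆ (X^{ℓ(A)} + p(A)) ∪ int T_ℝ`,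
`F(min A) = min X^{ℓ(A)} + p(A) ∈ T_ℝ`, and such that every point of `X` whose image lies
in `X + ℤ` belongs to some element of `𝒫`. -/
structure BasicPartition {T : Type} [MetricSpace T] (S : SunLike T) where
  P : Type
  Pfin : Fintype P
  bi : P → S.Λ
  lo : P → ℝ
  hi : P → ℝ
  lo_mem : ∀ A, lo A ∈ Set.Icc 0 (S.len (bi A))
  hi_mem : ∀ A, hi A ∈ Set.Icc 0 (S.len (bi A))
  lo_le_hi : ∀ A, lo A ≤ hi A
  ℓv : P → S.Λ
  pw : P → ℤ
  disj : ∀ A B : P, A ≠ B →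
    Disjoint (S.emb (bi A) '' Set.Icc (lo A) (hi A)) (S.emb (bi B) '' Set.Icc (lo B) (hi B))
  maps : ∀ A, S.F '' (S.emb (bi A) '' Set.Icc (lo A) (hi A)) ⊆
    (S.τ ^ pw A) '' S.branch (ℓv A) ∪ interior S.TR
  min_maps : ∀ A, S.F (S.emb (bi A) (lo A)) = (S.τ ^ pw A) (S.minB (ℓv A))
  min_maps_TR : ∀ A, S.F (S.emb (bi A) (lo A)) ∈ S.TR
  complete : ∀ x ∈ S.X, S.F x ∈ S.XZ → ∃ A, x ∈ S.emb (bi A) '' Set.Icc (lo A) (hi A)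

namespace BasicPartition

variable {T : Type} [MetricSpace T] {S : SunLike T} (Q : BasicPartition S)

/-- the element `A` of the partition, as a subset of `T` -/
def Aset (A : Q.P) : Set T := S.emb (Q.bi A) '' Set.Icc (Q.lo A) (Q.hi A)

/-- `x ∈ A + ℤ` -/
def memZ (x : T) (A : Q.P) : Prop := ∃ m : ℤ, x ∈ (S.τ ^ m) '' Q.Aset A

/-- `x ∈ X^∞` has itinerary `(Aₙ)` when `F^n(x) ∈ Aₙ + ℤ` for all `n` -/
def Itinerary (x : T) (A : ℕ → Q.P) : Prop := ∀ n : ℕ, Q.memZ (S.F^[n] x) (A n)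

/-- The set `⟨A₀…Aₙ⟩ := F^n {x : ∀ i ≤ n, F^i(x) ∈ A_i + ℤ} ∩ X`, for a word stored in
reverse: the list `[Aₙ, …, A₀]` represents the word `A₀…Aₙ`. -/
def cylL (w : List Q.P) : Set T :=
  S.F^[w.length - 1] ''
      {x | ∀ i, ∀ _ : i < w.length,
        Q.memZ (S.F^[i] x) (w.get ⟨w.length - 1 - i, by omega⟩)} ∩ S.X

/-- the partition element corresponding to the last letter of a word (stored in reverse) -/
def AsetW : List Q.P → Set T
  | [] => ∅
  | A :: _ => Q.Aset A

/-- the equivalence `A₀…Aₙ ∼ B₀…B_m` between words (stored in reverse):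
the last `k+1` letters agree and `⟨A₀…A_{n-k}⟩ = A_{n-k} = B_{m-k} = ⟨B₀…B_{m-k}⟩`. -/
def equivW (w w' : List Q.P) : Prop :=
  ∃ k : ℕ, k + 1 ≤ w.length ∧ k + 1 ≤ w'.length ∧ w.take (k + 1) = w'.take (k + 1) ∧
    Q.cylL (w.drop k) = Q.AsetW (w.drop k) ∧ Q.cylL (w'.drop k) = Q.AsetW (w'.drop k)

/-- the height `H(α)`: the length of the significant part of the word `w`,
i.e. the least `k` such that `w` is equivalent to its suffix of length `k+1`. -/
noncomputable def height (w : List Q.P) : ℕ := sInf {k | Q.equivW w (w.take (k + 1))}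

/-- the word `A₀…Aₙ` of the first `n+1` symbols of an itinerary, stored in reverse -/
def wrd (A : ℕ → Q.P) (n : ℕ) : List Q.P := ((List.range (n + 1)).map A).reverse

/-- the weight `p(A)` of any arrow leaving a vertex `α` with `⟨α⟩ ⊂ A` -/
def pwW : List Q.P → ℤ
  | [] => 0
  | A :: _ => Q.pw A

end BasicPartition

section Auxiliary

namespace SunLike

variable {T : Type} [MetricSpace T] (S : SunLike T)

lemma F_tau_symm (x : T) : S.F (S.τ.symm x) = S.τ.symm (S.F x) := by
  have h := S.deg1 (S.τ.symm x)
  rw [Equiv.apply_symm_apply] at h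
  exact ((Equiv.symm_apply_eq S.τ).2 h).symm

lemma zpow_apply_apply (a b : ℤ) (x : T) :
    (S.τ ^ a) ((S.τ ^ b) x) = (S.τ ^ (a + b)) x := by
  rw [zpow_add, Equiv.Perm.mul_apply]

lemma zpow_zero_apply (x : T) : (S.τ ^ (0 : ℤ)) x = x := by
  rw [zpow_zero]; rfl

lemma zpow_neg_apply (a : ℤ) (x : T) : (S.τ ^ (-a)) ((S.τ ^ a) x) = x := by
  rw [S.zpow_apply_apply, neg_add_cancel, S.zpow_zero_apply]

lemma zpow_add_one_apply (k : ℤ) (x : T) : (S.τ ^ (k + 1)) x = S.τ ((S.τ ^ k) x) := by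
  rw [add_comm, ← S.zpow_apply_apply 1 k, zpow_one]

lemma zpow_neg_one_coe (x : T) : (S.τ ^ (-1 : ℤ)) x = S.τ.symm x := by
  rw [zpow_neg, zpow_one]; rfl

lemma zpow_sub_one_apply (k : ℤ) (x : T) : (S.τ ^ (k - 1)) x = S.τ.symm ((S.τ ^ k) x) := by
  rw [sub_eq_add_neg, add_comm, ← S.zpow_apply_apply (-1) k, S.zpow_neg_one_coe]

lemma F_zpow (m : ℤ) (x : T) : S.F ((S.τ ^ m) x) = (S.τ ^ m) (S.F x) := by
  induction m using Int.induction_on with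
  | zero => rw [S.zpow_zero_apply, S.zpow_zero_apply]
  | succ k ih => rw [S.zpow_add_one_apply, S.deg1, ih, ← S.zpow_add_one_apply]
  | pred k ih => rw [S.zpow_sub_one_apply, S.F_tau_symm, ih, ← S.zpow_sub_one_apply]

lemma F_iter_zpow (n : ℕ) (m : ℤ) (x : T) :
    S.F^[n] ((S.τ ^ m) x) = (S.τ ^ m) (S.F^[n] x) := by
  induction n with
  | zero => rfl
  | succ k ih => rw [Function.iterate_succ_apply', Function.iterate_succ_apply', ih, S.F_zpow]

lemma zpow_cont (m : ℤ) : Continuous ((S.τ ^ m : Equiv.Perm T) : T → T) := by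
  induction m using Int.induction_on with
  | zero =>
      have : ((S.τ ^ (0 : ℤ) : Equiv.Perm T) : T → T) = id := funext fun x => S.zpow_zero_apply x
      rw [this]; exact continuous_id
  | succ k ih =>
      have : ((S.τ ^ ((k : ℤ) + 1) : Equiv.Perm T) : T → T)
          = (S.τ : T → T) ∘ ((S.τ ^ (k : ℤ) : Equiv.Perm T) : T → T) :=
        funext fun x => S.zpow_add_one_apply k x
      rw [this]; exact S.τ_cont.comp ih
  | pred k ih =>
      have : ((S.τ ^ (-(k : ℤ) - 1) : Equiv.Perm T) : T → T)
          = (S.τ.symm : T → T) ∘ ((S.τ ^ (-(k : ℤ)) : Equiv.Perm T) : T → T) :=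
        funext fun x => S.zpow_sub_one_apply (-(k : ℤ)) x
      rw [this]; exact S.τ_symm_cont.comp ih

/-- `τ^m` as a homeomorphism -/
noncomputable def homeoZpow (m : ℤ) : T ≃ₜ T where
  toEquiv := (S.τ ^ m : Equiv.Perm T)
  continuous_toFun := S.zpow_cont m
  continuous_invFun := by
    have h : ((S.τ ^ m : Equiv.Perm T).invFun) = ((S.τ ^ (-m) : Equiv.Perm T) : T → T) := by
      rw [zpow_neg]; rfl
    rw [h]; exact S.zpow_cont (-m)

lemma homeoZpow_coe (m : ℤ) :
    ((S.homeoZpow m : T ≃ₜ T) : T → T) = ((S.τ ^ m : Equiv.Perm T) : T → T) := rfl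

lemma tau_image_range_line : (S.τ : T → T) '' Set.range S.line = Set.range S.line := by
  ext y
  constructor
  · rintro ⟨-, ⟨s, rfl⟩, rfl⟩
    exact ⟨s + 1, (S.line_tau s).symm⟩
  · rintro ⟨s, rfl⟩
    exact ⟨S.line (s - 1), ⟨s - 1, rfl⟩, by rw [S.line_tau, sub_add_cancel]⟩

lemma F_iter_tau (n : ℕ) (x : T) : S.F^[n] (S.τ x) = S.τ (S.F^[n] x) := by
  have h := S.F_iter_zpow n 1 x
  rwa [zpow_one] at h

lemma tau_image_TR : (S.τ : T → T) '' S.TR = S.TR := by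
  have hh : (((⟨S.τ, S.τ_cont, S.τ_symm_cont⟩ : T ≃ₜ T) : T ≃ₜ T) : T → T) = (S.τ : T → T) := rfl
  have hU : (S.τ : T → T) '' (⋃ n : ℕ, S.F^[n] '' Set.range S.line)
      = ⋃ n : ℕ, S.F^[n] '' Set.range S.line := by
    rw [Set.image_iUnion]
    refine Set.iUnion_congr fun n => ?_
    rw [← Set.image_comp]
    have h : (S.τ : T → T) ∘ S.F^[n] = S.F^[n] ∘ (S.τ : T → T) := by
      funext x; exact (S.F_iter_tau n x).symm
    rw [h, Set.image_comp, S.tau_image_range_line]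
  rw [S.TR_def, ← hh, Homeomorph.image_closure, hh, hU]

lemma tau_symm_image_TR : (S.τ.symm : T → T) '' S.TR = S.TR := by
  conv_lhs => rw [← S.tau_image_TR]
  rw [← Set.image_comp]
  have h : (S.τ.symm : T → T) ∘ (S.τ : T → T) = id := by
    funext x; exact S.τ.symm_apply_apply x
  rw [h, Set.image_id]

lemma zpow_image_TR (m : ℤ) : ((S.τ ^ m : Equiv.Perm T) : T → T) '' S.TR = S.TR := by
  induction m using Int.induction_on with
  | zero =>
      have : ((S.τ ^ (0 : ℤ) : Equiv.Perm T) : T → T) = id := funext fun x => S.zpow_zero_apply x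
      rw [this, Set.image_id]
  | succ k ih =>
      have h : ((S.τ ^ ((k : ℤ) + 1) : Equiv.Perm T) : T → T)
          = (S.τ : T → T) ∘ ((S.τ ^ (k : ℤ) : Equiv.Perm T) : T → T) :=
        funext fun x => S.zpow_add_one_apply k x
      rw [h, Set.image_comp, ih, S.tau_image_TR]
  | pred k ih =>
      have h : ((S.τ ^ (-(k : ℤ) - 1) : Equiv.Perm T) : T → T)
          = (S.τ.symm : T → T) ∘ ((S.τ ^ (-(k : ℤ)) : Equiv.Perm T) : T → T) :=
        funext fun x => S.zpow_sub_one_apply (-(k : ℤ)) x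
      rw [h, Set.image_comp, ih, S.tau_symm_image_TR]

lemma zpow_mem_interior_TR {x : T} (m : ℤ) (hx : x ∈ interior S.TR) :
    (S.τ ^ m) x ∈ interior S.TR := by
  have h1 : interior S.TR = ((S.τ ^ m : Equiv.Perm T) : T → T) '' interior S.TR := by
    conv_lhs => rw [← S.zpow_image_TR m]
    rw [← S.homeoZpow_coe, ← Homeomorph.image_interior, S.homeoZpow_coe]
  rw [h1]
  exact ⟨x, hx, rfl⟩

lemma minB_mem_branch (i : S.Λ) : S.minB i ∈ S.branch i :=
  ⟨0, ⟨le_refl 0, le_of_lt (S.len_pos i)⟩, rfl⟩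

lemma branch_subset_X (i : S.Λ) : S.branch i ⊆ S.X :=
  Set.subset_iUnion (fun j => S.branch j) i

lemma ret_mem_branch (i : S.Λ) (x : T) : S.ret i x ∈ S.branch i := by
  by_cases h : x ∈ S.emb i '' Set.Icc 0 (S.len i)
  · rw [S.ret_id i x h]; exact h
  · rw [S.ret_out i x h]; exact S.minB_mem_branch i

lemma minB_not_interior (i : S.Λ) : S.minB i ∉ interior S.TR := by
  intro hmem
  have hopen : interior S.TR ∈ 𝓝 (S.emb i 0) := (isOpen_interior).mem_nhds hmem
  have hcw : ContinuousWithinAt (S.emb i) (Set.Icc 0 (S.len i)) 0 :=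
    (S.emb_cont i) 0 ⟨le_refl 0, le_of_lt (S.len_pos i)⟩
  have hne : (𝓝[Set.Ioc (0:ℝ) (S.len i)] (0:ℝ)).NeBot := by
    rw [← mem_closure_iff_nhdsWithin_neBot, closure_Ioc (ne_of_lt (S.len_pos i))]
    exact ⟨le_refl 0, le_of_lt (S.len_pos i)⟩
  have hle : 𝓝[Set.Ioc (0:ℝ) (S.len i)] (0:ℝ) ≤ 𝓝[Set.Icc 0 (S.len i)] (0:ℝ) :=
    nhdsWithin_mono _ Set.Ioc_subset_Icc_self
  have htend : Filter.Tendsto (S.emb i) (𝓝[Set.Ioc (0:ℝ) (S.len i)] 0) (𝓝 (S.emb i 0)) :=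
    hcw.tendsto.mono_left hle
  have hev : ∀ᶠ t in 𝓝[Set.Ioc (0:ℝ) (S.len i)] (0:ℝ), S.emb i t ∈ interior S.TR :=
    htend.eventually_mem hopen
  have hev2 : ∀ᶠ t in 𝓝[Set.Ioc (0:ℝ) (S.len i)] (0:ℝ), t ∈ Set.Ioc (0:ℝ) (S.len i) :=
    eventually_mem_nhdsWithin
  obtain ⟨t, ht1, ht2⟩ := (hev.and hev2).exists
  have htmem : S.emb i t ∈ (S.emb i '' Set.Icc 0 (S.len i)) ∩ S.TR :=
    ⟨⟨t, Set.Ioc_subset_Icc_self ht2, rfl⟩, interior_subset ht1⟩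
  rw [S.branch_inter_TR i] at htmem
  have heq := S.emb_inj i (Set.Ioc_subset_Icc_self ht2)
    ⟨le_refl 0, le_of_lt (S.len_pos i)⟩ htmem
  exact absurd heq (ne_of_gt ht2.1)

/-- a preconnected subset of a branch containing the attachment point and `emb i t`
contains `emb i s` for all `0 ≤ s ≤ t`. -/
lemma connected_down (i : S.Λ) {K : Set T} (hconn : IsPreconnected K)
    (hsub : K ⊆ S.branch i) {s t : ℝ} (hs0 : 0 ≤ s) (hst : s ≤ t) (htlen : t ≤ S.len i)
    (h0 : S.emb i 0 ∈ K) (ht : S.emb i t ∈ K) : S.emb i s ∈ K := by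
  rcases eq_or_lt_of_le hs0 with h | hs0'
  · rwa [← h]
  rcases eq_or_lt_of_le hst with h | hst'
  · rwa [h]
  by_contra hnot
  have hslen : s ≤ S.len i := le_trans hst htlen
  have hIccSub : Set.Icc s (S.len i) ⊆ Set.Icc 0 (S.len i) :=
    Set.Icc_subset_Icc (le_of_lt hs0') (le_refl _)
  have hIccSub2 : Set.Icc (0:ℝ) s ⊆ Set.Icc 0 (S.len i) :=
    Set.Icc_subset_Icc (le_refl _) hslen
  set u : Set T := (S.emb i '' Set.Icc s (S.len i))ᶜ with hu_def
  set v : Set T := S.emb i '' Set.Ioc 0 (S.len i) \ S.emb i '' Set.Icc 0 s with hv_def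
  have hcu : IsCompact (S.emb i '' Set.Icc s (S.len i)) :=
    IsCompact.image_of_continuousOn isCompact_Icc ((S.emb_cont i).mono hIccSub)
  have hcv : IsCompact (S.emb i '' Set.Icc 0 s) :=
    IsCompact.image_of_continuousOn isCompact_Icc ((S.emb_cont i).mono hIccSub2)
  have hu : IsOpen u := hcu.isClosed.isOpen_compl
  have hv : IsOpen v := (S.branch_open i).sdiff hcv.isClosed
  have hcover : K ⊆ u ∪ v := by
    intro z hz
    obtain ⟨r, hr, rfl⟩ := hsub hz
    have hrs : r ≠ s := by
      rintro rfl; exact hnot hz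
    rcases lt_or_gt_of_ne hrs with hlt | hgt
    · left
      rintro ⟨r', hr', he⟩
      have heq := S.emb_inj i hr (hIccSub hr') he.symm
      rw [heq] at hlt
      exact absurd hr'.1 (not_le_of_gt hlt)
    · right
      refine ⟨⟨r, ⟨lt_trans hs0' hgt, hr.2⟩, rfl⟩, ?_⟩
      rintro ⟨r', hr', he⟩
      have heq := S.emb_inj i hr (hIccSub2 hr') he.symm
      rw [heq] at hgt
      exact absurd hr'.2 (not_le_of_gt hgt)
  have hKu : (K ∩ u).Nonempty := by
    refine ⟨S.emb i 0, h0, ?_⟩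
    rintro ⟨r', hr', he⟩
    have heq := S.emb_inj i ⟨le_refl 0, le_of_lt (S.len_pos i)⟩ (hIccSub hr') he.symm
    rw [← heq] at hr'
    exact absurd hr'.1 (not_le_of_gt hs0')
  have hKv : (K ∩ v).Nonempty := by
    refine ⟨S.emb i t, ht, ⟨t, ⟨lt_trans hs0' hst', htlen⟩, rfl⟩, ?_⟩
    rintro ⟨r', hr', he⟩
    have heq := S.emb_inj i ⟨le_trans hs0 hst, htlen⟩ (hIccSub2 hr') he.symm
    rw [← heq] at hr'
    exact absurd hr'.2 (not_le_of_gt hst')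
  obtain ⟨z, hzK, hzu, hzv⟩ := hconn u v hu hv hcover hKu hKv
  obtain ⟨r, hr, rfl⟩ := hzv.1
  have hrs : r ∈ Set.Icc s (S.len i) := by
    refine ⟨?_, hr.2⟩
    by_contra hc
    exact hzv.2 ⟨r, ⟨le_of_lt hr.1, le_of_not_ge hc⟩, rfl⟩
  exact hzu ⟨r, hrs, rfl⟩

end SunLike

namespace BasicPartition

variable {T : Type} [MetricSpace T] {S : SunLike T} (Q : BasicPartition S)

lemma Aset_subset_branch (A : Q.P) : Q.Aset A ⊆ S.branch (Q.bi A) :=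
  Set.image_mono (Set.Icc_subset_Icc (Q.lo_mem A).1 (Q.hi_mem A).2)

lemma Aset_subset_X (A : Q.P) : Q.Aset A ⊆ S.X :=
  le_trans (Q.Aset_subset_branch A) (S.branch_subset_X _)

lemma memZ_zpow (m : ℤ) (x : T) (A : Q.P) :
    Q.memZ ((S.τ ^ m) x) A ↔ Q.memZ x A := by
  constructor
  · rintro ⟨k, a, ha, hk⟩
    refine ⟨k - m, a, ha, ?_⟩
    have h := congrArg (S.τ ^ (-m) : Equiv.Perm T) hk
    rw [S.zpow_neg_apply, S.zpow_apply_apply] at h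
    rw [show k - m = -m + k by ring]
    exact h
  · rintro ⟨k, a, ha, hk⟩
    exact ⟨m + k, a, ha, by rw [← S.zpow_apply_apply, hk]⟩

lemma memZ_self {x : T} {A : Q.P} (hx : x ∈ Q.Aset A) : Q.memZ x A :=
  ⟨0, x, hx, S.zpow_zero_apply x⟩

lemma mem_Aset_of_memZ {x : T} {A : Q.P} (hx : x ∈ S.X) (h : Q.memZ x A) :
    x ∈ Q.Aset A := by
  obtain ⟨m, hm⟩ := h
  obtain ⟨j, hj⟩ := Set.mem_iUnion.1 hx
  rcases eq_or_ne m 0 with rfl | hm0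
  · obtain ⟨a, ha, hk⟩ := hm
    rw [S.zpow_zero_apply] at hk
    rwa [← hk]
  · exfalso
    have hd := S.translates_disjoint j (Q.bi A) 0 m (Or.inr (Ne.symm hm0))
    have hx1 : x ∈ ((S.τ ^ (0:ℤ)) : Equiv.Perm T) '' (S.emb j '' Set.Icc 0 (S.len j)) :=
      ⟨x, hj, S.zpow_zero_apply x⟩
    have hx2 : x ∈ ((S.τ ^ m) : Equiv.Perm T) '' (S.emb (Q.bi A) '' Set.Icc 0 (S.len (Q.bi A))) := by
      obtain ⟨a, ha, hk⟩ := hm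
      exact ⟨a, Q.Aset_subset_branch A ha, hk⟩
    exact Set.disjoint_left.1 hd hx1 hx2

lemma cylL_singleton (A : Q.P) : Q.cylL [A] = Q.Aset A := by
  ext z
  simp only [cylL, List.length_singleton, Set.mem_inter_iff, Set.mem_image, Set.mem_setOf_eq]
  constructor
  · rintro ⟨⟨x, hx, rfl⟩, hX⟩
    have h := hx 0 (by norm_num)
    exact Q.mem_Aset_of_memZ hX h
  · intro hz
    refine ⟨⟨z, ?_, rfl⟩, Q.Aset_subset_X A hz⟩
    intro i hi
    interval_cases i
    exact Q.memZ_self hz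

lemma cylL_cons (B : Q.P) (w : List Q.P) (hw : w ≠ []) :
    Q.cylL (B :: w) =
      (⋃ m : ℤ, ((S.τ ^ m : Equiv.Perm T) : T → T) '' (S.F '' Q.cylL w)) ∩ Q.Aset B := by
  have hlp : 0 < w.length := List.length_pos_iff.2 hw
  ext z
  simp only [cylL, List.length_cons, Set.mem_inter_iff, Set.mem_image, Set.mem_setOf_eq,
    Set.mem_iUnion]
  constructor
  · rintro ⟨⟨x, hx, hFx⟩, hX⟩
    have hlen1 : w.length + 1 - 1 = (w.length - 1) + 1 := by omega
    have hB : Q.memZ (S.F^[w.length] x) B := by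
      have h := hx w.length (by omega)
      have hidx : w.length + 1 - 1 - w.length = 0 := by omega
      have hgt : (B :: w).get ⟨w.length + 1 - 1 - w.length, by simp⟩ = B := by
        simp only [hidx]; rfl
      rwa [hgt] at h
    have hFx' : S.F^[w.length] x = z := by rwa [Nat.add_sub_cancel] at hFx
    have hzB : z ∈ Q.Aset B := Q.mem_Aset_of_memZ hX (by rwa [hFx'] at hB)
    refine ⟨?_, hzB⟩
    have hy : Q.memZ (S.F^[w.length - 1] x) (w.get ⟨0, hlp⟩) := by
      have h := hx (w.length - 1) (by omega)
      have hidx : w.length + 1 - 1 - (w.length - 1) = 1 := by omega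
      have hgt : (B :: w).get ⟨w.length + 1 - 1 - (w.length - 1), by simp⟩
          = w.get ⟨0, hlp⟩ := by
        simp only [hidx]; rfl
      rwa [hgt] at h
    obtain ⟨k, a, ha, hk⟩ := hy
    have hyk : (S.τ ^ (-k)) (S.F^[w.length - 1] x) = a := by
      rw [← hk, S.zpow_neg_apply]
    refine ⟨k, S.F ((S.τ ^ (-k)) (S.F^[w.length - 1] x)),
      ⟨(S.τ ^ (-k)) (S.F^[w.length - 1] x), ⟨⟨(S.τ ^ (-k)) x, ?_, ?_⟩, ?_⟩, rfl⟩, ?_⟩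
    · intro i hi
      rw [S.F_iter_zpow, Q.memZ_zpow]
      have h := hx i (by omega)
      have hidx : w.length + 1 - 1 - i = (w.length - 1 - i) + 1 := by omega
      have hgt : (B :: w).get ⟨w.length + 1 - 1 - i, by simp⟩
          = w.get ⟨w.length - 1 - i, by omega⟩ := by
        simp only [hidx]; rfl
      rwa [hgt] at h
    · rw [S.F_iter_zpow]
    · rw [hyk]; exact Q.Aset_subset_X _ ha
    · rw [S.F_zpow, S.zpow_apply_apply, add_neg_cancel, S.zpow_zero_apply,
        ← Function.iterate_succ_apply' S.F (w.length - 1) x]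
      rw [hlen1] at hFx
      exact hFx
  · rintro ⟨⟨m, fy, ⟨y, hy, rfl⟩, rfl⟩, hzB⟩
    obtain ⟨⟨x, hx, hFx⟩, hyX⟩ := hy
    have heq : S.F^[w.length] ((S.τ ^ m) x) = (S.τ ^ m) (S.F y) := by
      rw [S.F_iter_zpow]
      congr 1
      rw [← hFx, ← Function.iterate_succ_apply' S.F (w.length - 1) x]
      congr 1
      omega
    refine ⟨⟨(S.τ ^ m) x, ?_, ?_⟩, Q.Aset_subset_X B hzB⟩
    · intro i hi
      rcases (by omega : i < w.length ∨ i = w.length) with hlt | rfl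
      · rw [S.F_iter_zpow, Q.memZ_zpow]
        have h := hx i hlt
        have hidx : w.length + 1 - 1 - i = (w.length - 1 - i) + 1 := by omega
        have hgt : (B :: w).get ⟨w.length + 1 - 1 - i, by simp⟩
            = w.get ⟨w.length - 1 - i, by omega⟩ := by
          simp only [hidx]; rfl
        rw [hgt]
        exact h
      · have hidx : w.length + 1 - 1 - w.length = 0 := by omega
        have hgt : (B :: w).get ⟨w.length + 1 - 1 - w.length, by simp⟩ = B := by
          simp only [hidx]; rfl
        rw [hgt, heq]
        exact Q.memZ_self hzB
    · rw [Nat.add_sub_cancel]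
      exact heq

lemma AsetW_cons (A : Q.P) (l : List Q.P) : Q.AsetW (A :: l) = Q.Aset A := rfl

lemma cylL_len_one {v : List Q.P} (hv : v.length = 1) : Q.cylL v = Q.AsetW v := by
  obtain ⟨a, rfl⟩ := List.length_eq_one_iff.1 hv
  rw [Q.cylL_singleton, Q.AsetW_cons]

lemma height_eq_sInf (w : List Q.P) (hw : w ≠ []) :
    Q.height w = sInf {m | m + 1 ≤ w.length ∧ Q.cylL (w.drop m) = Q.AsetW (w.drop m)} := by
  set s := {m | m + 1 ≤ w.length ∧ Q.cylL (w.drop m) = Q.AsetW (w.drop m)} with hs_def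
  have hlp : 0 < w.length := List.length_pos_iff.2 hw
  have hsne : (w.length - 1) ∈ s := by
    refine ⟨by omega, ?_⟩
    apply Q.cylL_len_one
    rw [List.length_drop]; omega
  have hmem : sInf s ∈ s := Nat.sInf_mem ⟨_, hsne⟩
  have hinE : Q.equivW w (w.take (sInf s + 1)) := by
    refine ⟨sInf s, hmem.1, ?_, ?_, hmem.2, ?_⟩
    · rw [List.length_take]
      have := hmem.1
      omega
    · rw [List.take_take, min_self]
    · apply Q.cylL_len_one
      rw [List.length_drop, List.length_take, min_eq_left hmem.1]
      omega
  have hlb : ∀ k ∈ {k | Q.equivW w (w.take (k + 1))}, sInf s ≤ k := by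
    rintro k ⟨m, hm1, hm2, _, hm4, _⟩
    rw [List.length_take] at hm2
    have hmk : m ≤ k := by omega
    exact le_trans (Nat.sInf_le ⟨hm1, hm4⟩) hmk
  show sInf {k | Q.equivW w (w.take (k + 1))} = sInf s
  exact le_antisymm (Nat.sInf_le hinE) (hlb _ (Nat.sInf_mem ⟨_, hinE⟩))

lemma height_cons_eq_zero (B : Q.P) (w : List Q.P) (h : Q.cylL (B :: w) = Q.Aset B) :
    Q.height (B :: w) = 0 := by
  rw [Q.height_eq_sInf (B :: w) (List.cons_ne_nil _ _)]
  have h0 : 0 ∈ {m | m + 1 ≤ (B :: w).length ∧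
      Q.cylL ((B :: w).drop m) = Q.AsetW ((B :: w).drop m)} := by
    refine ⟨by simp, ?_⟩
    rw [List.drop_zero, Q.AsetW_cons]
    exact h
  exact Nat.le_zero.1 (Nat.sInf_le h0)

lemma height_cons_pos (B : Q.P) (w : List Q.P) (hw : w ≠ []) (h0 : Q.height (B :: w) ≠ 0) :
    Q.height (B :: w) = Q.height w + 1 := by
  have hlp : 0 < w.length := List.length_pos_iff.2 hw
  rw [Q.height_eq_sInf (B :: w) (List.cons_ne_nil _ _)] at h0 ⊢
  rw [Q.height_eq_sInf w hw]
  set s' := {m | m + 1 ≤ (B :: w).length ∧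
      Q.cylL ((B :: w).drop m) = Q.AsetW ((B :: w).drop m)} with hs'_def
  set s := {m | m + 1 ≤ w.length ∧ Q.cylL (w.drop m) = Q.AsetW (w.drop m)} with hs_def
  have hiff : ∀ m : ℕ, (m + 1 ∈ s') ↔ m ∈ s := by
    intro m
    simp only [hs'_def, hs_def, Set.mem_setOf_eq, List.drop_succ_cons, List.length_cons]
    constructor
    · rintro ⟨h1, h2⟩; exact ⟨by omega, h2⟩
    · rintro ⟨h1, h2⟩; exact ⟨by omega, h2⟩
  have hne' : s'.Nonempty := by
    refine ⟨w.length, by simp, ?_⟩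
    apply Q.cylL_len_one
    rw [List.length_drop, List.length_cons]; omega
  have hmem' : sInf s' ∈ s' := Nat.sInf_mem hne'
  obtain ⟨m, hm⟩ := Nat.exists_eq_succ_of_ne_zero h0
  have hms : m ∈ s := (hiff m).1 (by rw [← Nat.succ_eq_add_one, ← hm]; exact hmem')
  have h1 : sInf s' ≤ sInf s + 1 := Nat.sInf_le ((hiff _).2 (Nat.sInf_mem ⟨m, hms⟩))
  have h2 : sInf s + 1 ≤ sInf s' := by
    rw [hm]
    exact Nat.succ_le_succ (Nat.sInf_le hms)
  omega

/-- the key geometric step: the cylinder of `B :: w` is an initial interval of the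
partition element `B`, which must lie on the branch `ℓ(A)`. -/
lemma cons_step (A : Q.P) (w : List Q.P) (hw : w ≠ []) {c : ℝ}
    (hc1 : Q.lo A ≤ c) (hc2 : c ≤ Q.hi A)
    (hcyl : Q.cylL w = S.emb (Q.bi A) '' Set.Icc (Q.lo A) c) :
    ∃ M, 0 ≤ M ∧ M ≤ S.len (Q.ℓv A) ∧ ∀ B : Q.P, Q.cylL (B :: w) ≠ ∅ →
      Q.bi B = Q.ℓv A ∧ Q.lo B ≤ min M (Q.hi B) ∧
      Q.cylL (B :: w) = S.emb (Q.ℓv A) '' Set.Icc (Q.lo B) (min M (Q.hi B)) := by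
  set ℓ := Q.ℓv A with hℓ
  set p := Q.pw A with hp
  have hsub : Q.cylL w ⊆ Q.Aset A := by
    rw [hcyl]
    exact Set.image_mono (Set.Icc_subset_Icc le_rfl hc2)
  have hIccsub : Set.Icc (Q.lo A) c ⊆ Set.Icc 0 (S.len (Q.bi A)) :=
    Set.Icc_subset_Icc (Q.lo_mem A).1 (le_trans hc2 (Q.hi_mem A).2)
  have hcylcomp : IsCompact (Q.cylL w) := by
    rw [hcyl]
    exact isCompact_Icc.image_of_continuousOn ((S.emb_cont _).mono hIccsub)
  have hcylconn : IsPreconnected (Q.cylL w) := by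
    rw [hcyl]
    exact (isPreconnected_Icc).image _ ((S.emb_cont _).mono hIccsub)
  set K : Set T := ((S.τ ^ (-p) : Equiv.Perm T) : T → T) '' (S.F '' Q.cylL w) with hK_def
  have hKcomp : IsCompact K := (hcylcomp.image S.F_cont).image (S.zpow_cont (-p))
  have hKconn : IsPreconnected K :=
    (hcylconn.image _ S.F_cont.continuousOn).image _ (S.zpow_cont (-p)).continuousOn
  have hminA : S.emb (Q.bi A) (Q.lo A) ∈ Q.cylL w := by
    rw [hcyl]; exact ⟨Q.lo A, ⟨le_rfl, hc1⟩, rfl⟩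
  have hminK : S.minB ℓ ∈ K := by
    refine ⟨S.F (S.emb (Q.bi A) (Q.lo A)), ⟨_, hminA, rfl⟩, ?_⟩
    rw [Q.min_maps A, S.zpow_neg_apply]
  set K' : Set T := S.ret ℓ '' K with hK'_def
  have hK'comp : IsCompact K' := hKcomp.image (S.ret_cont ℓ)
  have hK'conn : IsPreconnected K' := hKconn.image _ (S.ret_cont ℓ).continuousOn
  have hK'sub : K' ⊆ S.branch ℓ := by
    rintro z ⟨y, -, rfl⟩
    exact S.ret_mem_branch ℓ y
  have h0K' : S.emb ℓ 0 ∈ K' :=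
    ⟨S.minB ℓ, hminK, S.ret_id ℓ _ (S.minB_mem_branch ℓ)⟩
  have hK'K : ∀ t ∈ Set.Icc 0 (S.len ℓ), S.emb ℓ t ∈ K' → S.emb ℓ t ∈ K := by
    rintro t ht ⟨y, hyK, hret⟩
    by_cases hb : y ∈ S.emb ℓ '' Set.Icc 0 (S.len ℓ)
    · rw [S.ret_id ℓ y hb] at hret
      rwa [← hret]
    · rw [S.ret_out ℓ y hb] at hret
      have ht0 : (0 : ℝ) = t :=
        S.emb_inj ℓ ⟨le_rfl, (S.len_pos ℓ).le⟩ ht hret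
      rw [← ht0]
      exact hminK
  set Kp : Set ℝ := Set.Icc 0 (S.len ℓ) ∩ (S.emb ℓ) ⁻¹' K' with hKp_def
  have hKpclosed : IsClosed Kp :=
    ContinuousOn.preimage_isClosed_of_isClosed (S.emb_cont ℓ) isClosed_Icc hK'comp.isClosed
  have hKp0 : (0:ℝ) ∈ Kp := ⟨⟨le_rfl, (S.len_pos ℓ).le⟩, h0K'⟩
  have hKpbdd : BddAbove Kp := bddAbove_Icc.mono Set.inter_subset_left
  set M : ℝ := sSup Kp with hM_def
  have hMKp : M ∈ Kp := hKpclosed.csSup_mem ⟨0, hKp0⟩ hKpbdd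
  have hM0 : (0:ℝ) ≤ M := le_csSup hKpbdd hKp0
  have hMlen : M ≤ S.len ℓ := hMKp.1.2
  have hdown : ∀ t, 0 ≤ t → t ≤ M → S.emb ℓ t ∈ K' := fun t h1 h2 =>
    S.connected_down ℓ hK'conn hK'sub h1 h2 hMlen h0K' hMKp.2
  refine ⟨M, hM0, hMlen, fun B hBne => ?_⟩
  have hclass : ∀ z ∈ Q.cylL (B :: w), Q.bi B = ℓ ∧ z ∈ K ∧ z ∈ Q.Aset B := by
    intro z hz
    rw [Q.cylL_cons B w hw] at hz
    obtain ⟨hzU, hzB⟩ := hz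
    obtain ⟨m, fy, ⟨y, hy, rfl⟩, rfl⟩ := Set.mem_iUnion.1 hzU
    have hFy : S.F y ∈ ((S.τ ^ p : Equiv.Perm T) : T → T) '' S.branch ℓ ∪ interior S.TR :=
      Q.maps A ⟨y, hsub hy, rfl⟩
    rcases hFy with ⟨b, hb, hFyeq⟩ | hint
    · have hzb : (S.τ ^ m) (S.F y) = (S.τ ^ (m + p)) b := by
        rw [← hFyeq, S.zpow_apply_apply]
      have hcond : ¬(Q.bi B ≠ ℓ ∨ (0:ℤ) ≠ m + p) := by
        intro hor
        have hd := S.translates_disjoint (Q.bi B) ℓ 0 (m + p) hor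
        have hx1 : (S.τ ^ m) (S.F y) ∈
            ((S.τ ^ (0:ℤ)) : Equiv.Perm T) '' (S.emb (Q.bi B) '' Set.Icc 0 (S.len (Q.bi B))) :=
          ⟨_, Q.Aset_subset_branch B hzB, S.zpow_zero_apply _⟩
        have hx2 : (S.τ ^ m) (S.F y) ∈
            ((S.τ ^ (m + p)) : Equiv.Perm T) '' (S.emb ℓ '' Set.Icc 0 (S.len ℓ)) :=
          ⟨b, hb, hzb.symm⟩
        exact Set.disjoint_left.1 hd hx1 hx2
      push_neg at hcond
      obtain ⟨hbi, hmp⟩ := hcond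
      have hm : m = -p := by omega
      refine ⟨hbi, ?_, hzB⟩
      rw [hm]
      exact ⟨S.F y, ⟨y, hy, rfl⟩, rfl⟩
    · exfalso
      have hzint : (S.τ ^ m) (S.F y) ∈ interior S.TR := S.zpow_mem_interior_TR m hint
      have hzbr : (S.τ ^ m) (S.F y) ∈
          (S.emb (Q.bi B) '' Set.Icc 0 (S.len (Q.bi B))) ∩ S.TR :=
        ⟨Q.Aset_subset_branch B hzB, interior_subset hzint⟩
      rw [S.branch_inter_TR (Q.bi B)] at hzbr
      rw [hzbr] at hzint
      exact S.minB_not_interior (Q.bi B) hzint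
  obtain ⟨z₀, hz₀⟩ := Set.nonempty_iff_ne_empty.2 hBne
  have hbi : Q.bi B = ℓ := (hclass z₀ hz₀).1
  have hIccBsub : Set.Icc (Q.lo B) (Q.hi B) ⊆ Set.Icc 0 (S.len ℓ) := by
    rw [← hbi]
    exact Set.Icc_subset_Icc (Q.lo_mem B).1 (Q.hi_mem B).2
  have hsubD : Q.cylL (B :: w) ⊆ S.emb ℓ '' Set.Icc (Q.lo B) (min M (Q.hi B)) := by
    intro z hz
    obtain ⟨-, hzK, hzB⟩ := hclass z hz
    have hzB' : z ∈ S.emb ℓ '' Set.Icc (Q.lo B) (Q.hi B) := by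
      rw [← hbi]; exact hzB
    obtain ⟨t, htIcc, rfl⟩ := hzB'
    have ht0len : t ∈ Set.Icc 0 (S.len ℓ) := hIccBsub htIcc
    have htK' : S.emb ℓ t ∈ K' := ⟨S.emb ℓ t, hzK, S.ret_id ℓ _ ⟨t, ht0len, rfl⟩⟩
    have htM : t ≤ M := le_csSup hKpbdd ⟨ht0len, htK'⟩
    exact ⟨t, ⟨htIcc.1, le_min htM htIcc.2⟩, rfl⟩
  have hsupD : S.emb ℓ '' Set.Icc (Q.lo B) (min M (Q.hi B)) ⊆ Q.cylL (B :: w) := by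
    rintro z ⟨t, ⟨ht1, ht2⟩, rfl⟩
    have ht0 : (0:ℝ) ≤ t := le_trans (Q.lo_mem B).1 ht1
    have htM : t ≤ M := le_trans ht2 (min_le_left _ _)
    have htlen : t ≤ S.len ℓ := le_trans htM hMlen
    have htK : S.emb ℓ t ∈ K := hK'K t ⟨ht0, htlen⟩ (hdown t ht0 htM)
    rw [Q.cylL_cons B w hw]
    refine ⟨Set.mem_iUnion.2 ⟨-p, htK⟩, ?_⟩
    refine ⟨t, ⟨ht1, le_trans ht2 (min_le_right _ _)⟩, ?_⟩
    rw [hbi]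
  have heq : Q.cylL (B :: w) = S.emb ℓ '' Set.Icc (Q.lo B) (min M (Q.hi B)) :=
    le_antisymm hsubD hsupD
  refine ⟨hbi, ?_, heq⟩
  obtain ⟨t₀, ht₀, -⟩ := hsubD hz₀
  exact le_trans ht₀.1 ht₀.2

lemma cyl_struct : ∀ (w : List Q.P) (hw : w ≠ []), Q.cylL w ≠ ∅ →
    ∃ c, Q.lo (w.head hw) ≤ c ∧ c ≤ Q.hi (w.head hw) ∧
      Q.cylL w = S.emb (Q.bi (w.head hw)) '' Set.Icc (Q.lo (w.head hw)) c := by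
  intro w
  induction w with
  | nil => intro hw; exact absurd rfl hw
  | cons B w ih =>
      intro hBw hne
      rcases eq_or_ne w [] with rfl | hw
      · exact ⟨Q.hi B, Q.lo_le_hi B, le_rfl, by rw [Q.cylL_singleton]; rfl⟩
      · have hwne : Q.cylL w ≠ ∅ := by
          intro h0
          apply hne
          rw [Q.cylL_cons B w hw, h0]
          simp
        obtain ⟨c, hc1, hc2, hcyl⟩ := ih hw hwne
        obtain ⟨M, hM0, hMlen, hstep⟩ := Q.cons_step (w.head hw) w hw hc1 hc2 hcyl
        obtain ⟨hbi, hlo, heq⟩ := hstep B hne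
        refine ⟨min M (Q.hi B), hlo, min_le_right _ _, ?_⟩
        rw [heq, show (B :: w).head hBw = B from rfl, hbi]

end BasicPartition

end Auxiliary


/-- In the covering graph `𝒢` of a sun-like map (vertices: equivalence
classes of words `w` over `𝒫` with `⟨w⟩ ≠ ∅`, arrows: `w → B :: w`):
(i) all but at most one of the arrows starting from any vertex end at a vertex of the
basis (i.e. of height 0); (ii) if `α → β` is an arrow and `H(β) > 0` then
`H(β) = H(α) + 1`. -/
theorem covering_graph_structure {T : Type} [MetricSpace T] (S : SunLike T)
    (Q : BasicPartition S) (w : List Q.P) (hw : w ≠ []) (hwne : Q.cylL w ≠ ∅) :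
    (∀ B B' : Q.P,
      Q.cylL (B :: w) ≠ ∅ → Q.height (B :: w) ≠ 0 →
      Q.cylL (B' :: w) ≠ ∅ → Q.height (B' :: w) ≠ 0 → B = B') ∧
    (∀ B : Q.P, Q.cylL (B :: w) ≠ ∅ → 0 < Q.height (B :: w) →
      Q.height (B :: w) = Q.height w + 1) := by
  constructor
  · intro B B' hB hBh hB' hB'h
    obtain ⟨c, hc1, hc2, hcyl⟩ := Q.cyl_struct w hw hwne
    obtain ⟨M, hM0, hMlen, hstep⟩ := Q.cons_step (w.head hw) w hw hc1 hc2 hcyl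
    obtain ⟨hbi, hlo, heq⟩ := hstep B hB
    obtain ⟨hbi', hlo', heq'⟩ := hstep B' hB'
    have hprop : ∀ (C : Q.P), Q.bi C = Q.ℓv (w.head hw) → Q.lo C ≤ min M (Q.hi C) →
        Q.cylL (C :: w) = S.emb (Q.ℓv (w.head hw)) '' Set.Icc (Q.lo C) (min M (Q.hi C)) →
        Q.height (C :: w) ≠ 0 → S.emb (Q.ℓv (w.head hw)) M ∈ Q.Aset C := by
      intro C hbiC hloC heqC hhC
      have hMhi : M < Q.hi C := by
        by_contra hcon
        push_neg at hcon
        apply hhC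
        apply Q.height_cons_eq_zero
        rw [heqC, min_eq_right hcon,
          show Q.Aset C = S.emb (Q.bi C) '' Set.Icc (Q.lo C) (Q.hi C) from rfl, hbiC]
      have hminM : min M (Q.hi C) = M := min_eq_left hMhi.le
      have hres : S.emb (Q.ℓv (w.head hw)) M ∈ S.emb (Q.bi C) '' Set.Icc (Q.lo C) (Q.hi C) := by
        rw [hbiC]
        exact ⟨M, ⟨by rw [hminM] at hloC; exact hloC, hMhi.le⟩, rfl⟩
      exact hres
    have hmem := hprop B hbi hlo heq hBh
    have hmem' := hprop B' hbi' hlo' heq' hB'h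
    by_contra hne
    exact Set.disjoint_left.1 (Q.disj B B' hne) hmem hmem'
  · intro B hBne hpos
    exact Q.height_cons_pos B w hw (by omega)
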